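/- Let a₂₀ ∈ ℝ with a₂₀ ≠ 0, let p, q, r : ℝ² → ℝ be smooth functions with vanishing 2-jet at the origin, and let f(x,y) = (x, a₂₀x² + y² + p(x,y), q(x,y), r(x,y)). For a = (0, v₂, v₃, v₄) ∈ ℝ⁴: (i) the Hessian of d_a at the origin is degenerate if and only if v₂·(2a₂₀v₂ − 1) = 0, so the focal set at the origin is the union of the two distinct parallel planes {v₂ = 0} and {v₂ = 1/(2a₂₀)}; (ii) the Hessian of d_a at the origin is never the zero matrix, so there is no umbilical focus at the origin. -/

import Mathlib

/-- Partial derivative in the first variable of a function of two real variables. -/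
noncomputable def pdx (g : ℝ → ℝ → ℝ) (x y : ℝ) : ℝ := deriv (fun t => g t y) x

/-- Partial derivative in the second variable of a function of two real variables. -/
noncomputable def pdy (g : ℝ → ℝ → ℝ) (x y : ℝ) : ℝ := deriv (fun t => g x t) y

/-- The Hessian matrix at the origin of a function of two real variables. -/
noncomputable def hessAt0 (g : ℝ → ℝ → ℝ) : Matrix (Fin 2) (Fin 2) ℝ :=
  !![pdx (pdx g) 0 0, pdy (pdx g) 0 0;
     pdx (pdy g) 0 0, pdy (pdy g) 0 0]

/-- A function of two real variables has vanishing 2-jet at the origin: its value and all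
first- and second-order partial derivatives vanish at `(0,0)`. -/
noncomputable def jet2ZeroAt0 (g : ℝ → ℝ → ℝ) : Prop :=
  g 0 0 = 0 ∧ pdx g 0 0 = 0 ∧ pdy g 0 0 = 0 ∧ hessAt0 g = 0

lemma hasDerivAt_pdx {g : ℝ → ℝ → ℝ} (hg : ContDiff ℝ (⊤ : ℕ∞) (fun w : ℝ × ℝ => g w.1 w.2))
    (x y : ℝ) : HasDerivAt (fun t => g t y) (pdx g x y) x :=
  (((hg.differentiable (by simp)) (x, y)).comp (f := fun t : ℝ => (t, y)) x
      (differentiableAt_id.prodMk (differentiableAt_const y))).hasDerivAt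

lemma hasDerivAt_pdy {g : ℝ → ℝ → ℝ} (hg : ContDiff ℝ (⊤ : ℕ∞) (fun w : ℝ × ℝ => g w.1 w.2))
    (x y : ℝ) : HasDerivAt (fun t => g x t) (pdy g x y) y :=
  (((hg.differentiable (by simp)) (x, y)).comp (f := fun t : ℝ => (x, t)) y
      ((differentiableAt_const x).prodMk differentiableAt_id)).hasDerivAt

lemma contDiff_pdx {g : ℝ → ℝ → ℝ} (hg : ContDiff ℝ (⊤ : ℕ∞) (fun w : ℝ × ℝ => g w.1 w.2)) :
    ContDiff ℝ (⊤ : ℕ∞) (fun w : ℝ × ℝ => pdx g w.1 w.2) := by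
  have key : ∀ w : ℝ × ℝ, pdx g w.1 w.2
      = fderiv ℝ (fun w : ℝ × ℝ => g w.1 w.2) w ((1 : ℝ), (0 : ℝ)) := by
    intro w
    have hG : HasFDerivAt (fun w : ℝ × ℝ => g w.1 w.2)
        (fderiv ℝ (fun w : ℝ × ℝ => g w.1 w.2) w) w :=
      ((hg.differentiable (by simp)) w).hasFDerivAt
    have hc : HasDerivAt (fun t : ℝ => (t, w.2)) ((1 : ℝ), (0 : ℝ)) w.1 :=
      (hasDerivAt_id w.1).prodMk (hasDerivAt_const w.1 w.2)
    exact (hG.comp_hasDerivAt w.1 (by simpa using hc)).deriv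
  rw [show (fun w : ℝ × ℝ => pdx g w.1 w.2)
      = fun w => fderiv ℝ (fun w : ℝ × ℝ => g w.1 w.2) w ((1:ℝ), (0:ℝ)) from funext key]
  exact (hg.fderiv_right (by simp)).clm_apply contDiff_const

lemma contDiff_pdy {g : ℝ → ℝ → ℝ} (hg : ContDiff ℝ (⊤ : ℕ∞) (fun w : ℝ × ℝ => g w.1 w.2)) :
    ContDiff ℝ (⊤ : ℕ∞) (fun w : ℝ × ℝ => pdy g w.1 w.2) := by
  have key : ∀ w : ℝ × ℝ, pdy g w.1 w.2
      = fderiv ℝ (fun w : ℝ × ℝ => g w.1 w.2) w ((0 : ℝ), (1 : ℝ)) := by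
    intro w
    have hG : HasFDerivAt (fun w : ℝ × ℝ => g w.1 w.2)
        (fderiv ℝ (fun w : ℝ × ℝ => g w.1 w.2) w) w :=
      ((hg.differentiable (by simp)) w).hasFDerivAt
    have hc : HasDerivAt (fun t : ℝ => (w.1, t)) ((0 : ℝ), (1 : ℝ)) w.2 :=
      (hasDerivAt_const w.2 w.1).prodMk (hasDerivAt_id w.2)
    exact (hG.comp_hasDerivAt w.2 (by simpa using hc)).deriv
  rw [show (fun w : ℝ × ℝ => pdy g w.1 w.2)
      = fun w => fderiv ℝ (fun w : ℝ × ℝ => g w.1 w.2) w ((0:ℝ), (1:ℝ)) from funext key]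
  exact (hg.fderiv_right (by simp)).clm_apply contDiff_const

lemma hess_formula (a₂₀ v₂ v₃ v₄ : ℝ) (p q r : ℝ → ℝ → ℝ)
    (hp : ContDiff ℝ (⊤ : ℕ∞) (fun w : ℝ × ℝ => p w.1 w.2))
    (hq : ContDiff ℝ (⊤ : ℕ∞) (fun w : ℝ × ℝ => q w.1 w.2))
    (hr : ContDiff ℝ (⊤ : ℕ∞) (fun w : ℝ × ℝ => r w.1 w.2))
    (hpj : jet2ZeroAt0 p) (hqj : jet2ZeroAt0 q) (hrj : jet2ZeroAt0 r) :
    hessAt0 (fun x y => x ^ 2 + (a₂₀ * x ^ 2 + y ^ 2 + p x y - v₂) ^ 2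
        + (q x y - v₃) ^ 2 + (r x y - v₄) ^ 2)
      = !![2 - 4 * a₂₀ * v₂, 0; 0, -4 * v₂] := by
  obtain ⟨hp0, hpx, hpy, hpH⟩ := hpj
  obtain ⟨hq0, hqx, hqy, hqH⟩ := hqj
  obtain ⟨hr0, hrx, hry, hrH⟩ := hrj
  have hpxx : pdx (pdx p) 0 0 = 0 := by simpa [hessAt0] using congrFun (congrFun hpH 0) 0
  have hpxy : pdy (pdx p) 0 0 = 0 := by simpa [hessAt0] using congrFun (congrFun hpH 0) 1
  have hpyx : pdx (pdy p) 0 0 = 0 := by simpa [hessAt0] using congrFun (congrFun hpH 1) 0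
  have hpyy : pdy (pdy p) 0 0 = 0 := by simpa [hessAt0] using congrFun (congrFun hpH 1) 1
  have hqxx : pdx (pdx q) 0 0 = 0 := by simpa [hessAt0] using congrFun (congrFun hqH 0) 0
  have hqxy : pdy (pdx q) 0 0 = 0 := by simpa [hessAt0] using congrFun (congrFun hqH 0) 1
  have hqyx : pdx (pdy q) 0 0 = 0 := by simpa [hessAt0] using congrFun (congrFun hqH 1) 0
  have hqyy : pdy (pdy q) 0 0 = 0 := by simpa [hessAt0] using congrFun (congrFun hqH 1) 1
  have hrxx : pdx (pdx r) 0 0 = 0 := by simpa [hessAt0] using congrFun (congrFun hrH 0) 0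
  have hrxy : pdy (pdx r) 0 0 = 0 := by simpa [hessAt0] using congrFun (congrFun hrH 0) 1
  have hryx : pdx (pdy r) 0 0 = 0 := by simpa [hessAt0] using congrFun (congrFun hrH 1) 0
  have hryy : pdy (pdy r) 0 0 = 0 := by simpa [hessAt0] using congrFun (congrFun hrH 1) 1
  set D : ℝ → ℝ → ℝ := fun x y => x ^ 2 + (a₂₀ * x ^ 2 + y ^ 2 + p x y - v₂) ^ 2
        + (q x y - v₃) ^ 2 + (r x y - v₄) ^ 2 with hD
  -- first partial derivatives (everywhere)
  have hDx : ∀ x y, pdx D x y = 2 * x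
      + 2 * (a₂₀ * x ^ 2 + y ^ 2 + p x y - v₂) * (2 * a₂₀ * x + pdx p x y)
      + 2 * (q x y - v₃) * pdx q x y + 2 * (r x y - v₄) * pdx r x y := by
    intro x y
    have hA : HasDerivAt (fun t => a₂₀ * t ^ 2 + y ^ 2 + p t y - v₂)
        (2 * a₂₀ * x + pdx p x y) x := by
      have H := ((((hasDerivAt_pow 2 x).const_mul a₂₀).add_const (y ^ 2)).add
        (hasDerivAt_pdx hp x y)).sub_const v₂
      refine H.congr_deriv ?_; push_cast; ring
    have H : HasDerivAt (fun t => t ^ 2 + (a₂₀ * t ^ 2 + y ^ 2 + p t y - v₂) ^ 2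
        + (q t y - v₃) ^ 2 + (r t y - v₄) ^ 2)
        (2 * x
          + 2 * (a₂₀ * x ^ 2 + y ^ 2 + p x y - v₂) * (2 * a₂₀ * x + pdx p x y)
          + 2 * (q x y - v₃) * pdx q x y + 2 * (r x y - v₄) * pdx r x y) x := by
      have H := (((hasDerivAt_pow 2 x).add (hA.pow 2)).add
        (((hasDerivAt_pdx hq x y).sub_const v₃).pow 2)).add
        (((hasDerivAt_pdx hr x y).sub_const v₄).pow 2)
      refine H.congr_deriv ?_; push_cast; ring
    exact H.deriv
  have hDy : ∀ x y, pdy D x y =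
      2 * (a₂₀ * x ^ 2 + y ^ 2 + p x y - v₂) * (2 * y + pdy p x y)
      + 2 * (q x y - v₃) * pdy q x y + 2 * (r x y - v₄) * pdy r x y := by
    intro x y
    have hA : HasDerivAt (fun t => a₂₀ * x ^ 2 + t ^ 2 + p x t - v₂)
        (2 * y + pdy p x y) y := by
      have H := (((hasDerivAt_pow 2 y).const_add (a₂₀ * x ^ 2)).add
        (hasDerivAt_pdy hp x y)).sub_const v₂
      refine H.congr_deriv ?_; push_cast; ring
    have H : HasDerivAt (fun t => x ^ 2 + (a₂₀ * x ^ 2 + t ^ 2 + p x t - v₂) ^ 2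
        + (q x t - v₃) ^ 2 + (r x t - v₄) ^ 2)
        (2 * (a₂₀ * x ^ 2 + y ^ 2 + p x y - v₂) * (2 * y + pdy p x y)
          + 2 * (q x y - v₃) * pdy q x y + 2 * (r x y - v₄) * pdy r x y) y := by
      have H := (((hasDerivAt_const y (x ^ 2)).add (hA.pow 2)).add
        (((hasDerivAt_pdy hq x y).sub_const v₃).pow 2)).add
        (((hasDerivAt_pdy hr x y).sub_const v₄).pow 2)
      refine H.congr_deriv ?_; push_cast; ring
    exact H.deriv
  -- entry (0,0)
  have e11 : pdx (pdx D) 0 0 = 2 - 4 * a₂₀ * v₂ := by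
    have hfun : (fun t => pdx D t 0) = fun t => 2 * t
        + 2 * ((a₂₀ * t ^ 2 + 0 ^ 2 + p t 0 - v₂) * (2 * a₂₀ * t + pdx p t 0))
        + 2 * ((q t 0 - v₃) * pdx q t 0) + 2 * ((r t 0 - v₄) * pdx r t 0) :=
      funext fun t => by rw [hDx t 0]; ring
    have hA : HasDerivAt (fun t => a₂₀ * t ^ 2 + 0 ^ 2 + p t 0 - v₂) (pdx p 0 0) 0 := by
      have H := ((((hasDerivAt_pow 2 (0:ℝ)).const_mul a₂₀).add_const ((0:ℝ) ^ 2)).add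
        (hasDerivAt_pdx hp 0 0)).sub_const v₂
      refine H.congr_deriv ?_; push_cast; ring
    have hB : HasDerivAt (fun t => 2 * a₂₀ * t + pdx p t 0)
        (2 * a₂₀ + pdx (pdx p) 0 0) 0 := by
      have H := ((hasDerivAt_id (0:ℝ)).const_mul (2 * a₂₀)).add
        (hasDerivAt_pdx (contDiff_pdx hp) 0 0)
      refine H.congr_deriv ?_; ring
    have H := ((((hasDerivAt_id (0:ℝ)).const_mul 2).add
          ((hA.mul hB).const_mul 2)).add
        ((((hasDerivAt_pdx hq 0 0).sub_const v₃).mul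
            (hasDerivAt_pdx (contDiff_pdx hq) 0 0)).const_mul 2)).add
        ((((hasDerivAt_pdx hr 0 0).sub_const v₄).mul
            (hasDerivAt_pdx (contDiff_pdx hr) 0 0)).const_mul 2)
    rw [show pdx (pdx D) 0 0 = deriv (fun t => pdx D t 0) 0 from rfl, hfun]
    refine HasDerivAt.deriv ?_
    refine H.congr_deriv ?_
    simp only [hp0, hpx, hq0, hqx, hr0, hrx, hpxx, hqxx, hrxx]
    ring
  -- entry (0,1)
  have e12 : pdy (pdx D) 0 0 = 0 := by
    have hfun : (fun t => pdx D 0 t) = fun t => 2 * 0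
        + 2 * ((a₂₀ * 0 ^ 2 + t ^ 2 + p 0 t - v₂) * (2 * a₂₀ * 0 + pdx p 0 t))
        + 2 * ((q 0 t - v₃) * pdx q 0 t) + 2 * ((r 0 t - v₄) * pdx r 0 t) :=
      funext fun t => by rw [hDx 0 t]; ring
    have hA : HasDerivAt (fun t => a₂₀ * 0 ^ 2 + t ^ 2 + p 0 t - v₂) (pdy p 0 0) 0 := by
      have H := (((hasDerivAt_pow 2 (0:ℝ)).const_add (a₂₀ * 0 ^ 2)).add
        (hasDerivAt_pdy hp 0 0)).sub_const v₂
      refine H.congr_deriv ?_; push_cast; ring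
    have hB : HasDerivAt (fun t => 2 * a₂₀ * (0:ℝ) + pdx p 0 t)
        (pdy (pdx p) 0 0) 0 :=
      (hasDerivAt_pdy (contDiff_pdx hp) 0 0).const_add (2 * a₂₀ * 0)
    have H := (((hasDerivAt_const (0:ℝ) (2 * (0:ℝ))).add
          ((hA.mul hB).const_mul 2)).add
        ((((hasDerivAt_pdy hq 0 0).sub_const v₃).mul
            (hasDerivAt_pdy (contDiff_pdx hq) 0 0)).const_mul 2)).add
        ((((hasDerivAt_pdy hr 0 0).sub_const v₄).mul
            (hasDerivAt_pdy (contDiff_pdx hr) 0 0)).const_mul 2)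
    rw [show pdy (pdx D) 0 0 = deriv (fun t => pdx D 0 t) 0 from rfl, hfun]
    refine HasDerivAt.deriv ?_
    refine H.congr_deriv ?_
    simp only [hp0, hpy, hq0, hqy, hr0, hry, hpxy, hqxy, hrxy]
    ring
  -- entry (1,0)
  have e21 : pdx (pdy D) 0 0 = 0 := by
    have hfun : (fun t => pdy D t 0) = fun t =>
        2 * ((a₂₀ * t ^ 2 + 0 ^ 2 + p t 0 - v₂) * (2 * 0 + pdy p t 0))
        + 2 * ((q t 0 - v₃) * pdy q t 0) + 2 * ((r t 0 - v₄) * pdy r t 0) :=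
      funext fun t => by rw [hDy t 0]; ring
    have hA : HasDerivAt (fun t => a₂₀ * t ^ 2 + 0 ^ 2 + p t 0 - v₂) (pdx p 0 0) 0 := by
      have H := ((((hasDerivAt_pow 2 (0:ℝ)).const_mul a₂₀).add_const ((0:ℝ) ^ 2)).add
        (hasDerivAt_pdx hp 0 0)).sub_const v₂
      refine H.congr_deriv ?_; push_cast; ring
    have hB : HasDerivAt (fun t => 2 * (0:ℝ) + pdy p t 0) (pdx (pdy p) 0 0) 0 :=
      (hasDerivAt_pdx (contDiff_pdy hp) 0 0).const_add (2 * 0)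
    have H := (((hA.mul hB).const_mul 2).add
        ((((hasDerivAt_pdx hq 0 0).sub_const v₃).mul
            (hasDerivAt_pdx (contDiff_pdy hq) 0 0)).const_mul 2)).add
        ((((hasDerivAt_pdx hr 0 0).sub_const v₄).mul
            (hasDerivAt_pdx (contDiff_pdy hr) 0 0)).const_mul 2)
    rw [show pdx (pdy D) 0 0 = deriv (fun t => pdy D t 0) 0 from rfl, hfun]
    refine HasDerivAt.deriv ?_
    refine H.congr_deriv ?_
    simp only [hp0, hpx, hpy, hq0, hqx, hqy, hr0, hrx, hry, hpyx, hqyx, hryx]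
    ring
  -- entry (1,1)
  have e22 : pdy (pdy D) 0 0 = -4 * v₂ := by
    have hfun : (fun t => pdy D 0 t) = fun t =>
        2 * ((a₂₀ * 0 ^ 2 + t ^ 2 + p 0 t - v₂) * (2 * t + pdy p 0 t))
        + 2 * ((q 0 t - v₃) * pdy q 0 t) + 2 * ((r 0 t - v₄) * pdy r 0 t) :=
      funext fun t => by rw [hDy 0 t]; ring
    have hA : HasDerivAt (fun t => a₂₀ * 0 ^ 2 + t ^ 2 + p 0 t - v₂) (pdy p 0 0) 0 := by
      have H := (((hasDerivAt_pow 2 (0:ℝ)).const_add (a₂₀ * 0 ^ 2)).add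
        (hasDerivAt_pdy hp 0 0)).sub_const v₂
      refine H.congr_deriv ?_; push_cast; ring
    have hB : HasDerivAt (fun t => 2 * t + pdy p 0 t) (2 + pdy (pdy p) 0 0) 0 := by
      have H := ((hasDerivAt_id (0:ℝ)).const_mul 2).add
        (hasDerivAt_pdy (contDiff_pdy hp) 0 0)
      refine H.congr_deriv ?_; ring
    have H := (((hA.mul hB).const_mul 2).add
        ((((hasDerivAt_pdy hq 0 0).sub_const v₃).mul
            (hasDerivAt_pdy (contDiff_pdy hq) 0 0)).const_mul 2)).add
        ((((hasDerivAt_pdy hr 0 0).sub_const v₄).mul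
            (hasDerivAt_pdy (contDiff_pdy hr) 0 0)).const_mul 2)
    rw [show pdy (pdy D) 0 0 = deriv (fun t => pdy D 0 t) 0 from rfl, hfun]
    refine HasDerivAt.deriv ?_
    refine H.congr_deriv ?_
    simp only [hp0, hpy, hq0, hqy, hr0, hry, hpyy, hqyy, hryy]
    ring
  show hessAt0 D = _
  rw [hessAt0, e11, e12, e21, e22]

/-- For the normal form `f(x,y) = (x, a₂₀x² + y² + p, q, r)` with `a₂₀ ≠ 0` (an 𝓜₁-point,
radial half-line curvature parabola) and `a = (0, v₂, v₃, v₄)`: (i) the Hessian of `d_a`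
at the origin is degenerate iff `v₂(2a₂₀v₂ − 1) = 0`, so the focal set is the union of the
two distinct parallel planes `{v₂ = 0}` and `{v₂ = 1/(2a₂₀)}`; (ii) the Hessian is never
the zero matrix, so there is no umbilical focus. -/
theorem stmt10 (a₂₀ : ℝ) (ha₂₀ : a₂₀ ≠ 0) (p q r : ℝ → ℝ → ℝ)
    (hp : ContDiff ℝ (⊤ : ℕ∞) (fun w : ℝ × ℝ => p w.1 w.2))
    (hq : ContDiff ℝ (⊤ : ℕ∞) (fun w : ℝ × ℝ => q w.1 w.2))
    (hr : ContDiff ℝ (⊤ : ℕ∞) (fun w : ℝ × ℝ => r w.1 w.2))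
    (hpj : jet2ZeroAt0 p) (hqj : jet2ZeroAt0 q) (hrj : jet2ZeroAt0 r) :
    (∀ v₂ v₃ v₄ : ℝ,
      ((hessAt0 (fun x y => x ^ 2 + (a₂₀ * x ^ 2 + y ^ 2 + p x y - v₂) ^ 2
        + (q x y - v₃) ^ 2 + (r x y - v₄) ^ 2)).det = 0 ↔
        v₂ * (2 * a₂₀ * v₂ - 1) = 0)) ∧
    ({w : ℝ × ℝ × ℝ |
        (hessAt0 (fun x y => x ^ 2 + (a₂₀ * x ^ 2 + y ^ 2 + p x y - w.1) ^ 2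
          + (q x y - w.2.1) ^ 2 + (r x y - w.2.2) ^ 2)).det = 0}
      = {w : ℝ × ℝ × ℝ | w.1 = 0} ∪ {w : ℝ × ℝ × ℝ | w.1 = 1 / (2 * a₂₀)}) ∧
    (1 / (2 * a₂₀) ≠ (0 : ℝ)) ∧
    (∀ v₂ v₃ v₄ : ℝ,
      hessAt0 (fun x y => x ^ 2 + (a₂₀ * x ^ 2 + y ^ 2 + p x y - v₂) ^ 2
        + (q x y - v₃) ^ 2 + (r x y - v₄) ^ 2) ≠ 0) := by
  have key : ∀ v₂ v₃ v₄ : ℝ,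
      hessAt0 (fun x y => x ^ 2 + (a₂₀ * x ^ 2 + y ^ 2 + p x y - v₂) ^ 2
        + (q x y - v₃) ^ 2 + (r x y - v₄) ^ 2)
      = !![2 - 4 * a₂₀ * v₂, 0; 0, -4 * v₂] :=
    fun v₂ v₃ v₄ => hess_formula a₂₀ v₂ v₃ v₄ p q r hp hq hr hpj hqj hrj
  have hdet : ∀ v₂ v₃ v₄ : ℝ,
      ((hessAt0 (fun x y => x ^ 2 + (a₂₀ * x ^ 2 + y ^ 2 + p x y - v₂) ^ 2
        + (q x y - v₃) ^ 2 + (r x y - v₄) ^ 2)).det = 0 ↔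
        v₂ * (2 * a₂₀ * v₂ - 1) = 0) := by
    intro v₂ v₃ v₄
    rw [key v₂ v₃ v₄, Matrix.det_fin_two_of]
    constructor
    · intro h; linear_combination h / 8
    · intro h; linear_combination 8 * h
  have h2a : (2 * a₂₀ : ℝ) ≠ 0 := mul_ne_zero two_ne_zero ha₂₀
  refine ⟨hdet, ?_, one_div_ne_zero h2a, ?_⟩
  · ext ⟨v₂, v₃, v₄⟩
    simp only [Set.mem_setOf_eq, Set.mem_union]
    rw [hdet v₂ v₃ v₄, mul_eq_zero]
    have : (2 * a₂₀ * v₂ - 1 = 0) ↔ v₂ = 1 / (2 * a₂₀) := by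
      rw [eq_div_iff h2a]
      constructor <;> intro h <;> linear_combination h
    rw [this]
  · intro v₂ v₃ v₄ h
    rw [key v₂ v₃ v₄] at h
    have h00 : 2 - 4 * a₂₀ * v₂ = 0 := by
      simpa using congrFun (congrFun h 0) 0
    have h11 : -4 * v₂ = 0 := by
      simpa using congrFun (congrFun h 1) 1
    have hv : v₂ = 0 := by linarith
    rw [hv] at h00
    norm_num at h00
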